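/- Let F(x,y,p,d) = Σ_{n,k≥0} Σ_{π ∈ C_{n,k}} x^n y^k p^{sv(π)} d^{dsv(π)}, a well-defined formal power series in ℚ[[x,y,p,d]] (the coefficient of each monomial is a finite count). For each integer a ≥ 1 let B_a = 1 − y²·x^a·Σ_{j=1}^{a−1} x^j·(p·d^{a−j} − 1) ∈ ℚ[[x,y,p,d]] (so B₁ = 1); each B_a has constant term 1 and is invertible. Then F · (1 − Σ_{a≥1} x^a·y·B_a^{−1}) = 1, where the sum over a converges coefficientwise since the a-th summand has x-adic order at least a. (The polynomial y²x^aΣ_{j=1}^{a−1}x^j(p d^{a−j}−1) is the power-series meaning of the expression y²x^{a+1}((p x^{a−1} − d^{a−1})/(x/d − 1) − (x^{a−1} − 1)/(x−1)) appearing in the paper, so this is the statement F = 1/(1 − Σ_{a≥1} x^a y/(1 − y²x^{a+1}((px^{a−1}−d^{a−1})/(x/d−1) − (x^{a−1}−1)/(x−1)))).) -/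

import Mathlib

/-- The indices (0-based) of symmetric valleys of a list of naturals:
`i` is a symmetric valley if `L i > L (i+1)` and `L i = L (i+2)`. -/
def symValleyIdx (L : List ℕ) : Finset ℕ :=
  (Finset.range L.length).filter (fun i =>
    i + 2 < L.length ∧ L.getD i 0 > L.getD (i+1) 0 ∧ L.getD i 0 = L.getD (i+2) 0)

/-- `sv π`: the number of symmetric valleys of `π`. -/
def svL (L : List ℕ) : ℕ := (symValleyIdx L).card

/-- `dsv π`: the sum of the depths of the symmetric valleys of `π`. -/
def dsvL (L : List ℕ) : ℕ := ∑ i ∈ symValleyIdx L, (L.getD i 0 - L.getD (i+1) 0)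

/-- Variables: `X 0 = x`, `X 1 = y`, `X 2 = p`, `X 3 = d`. -/
noncomputable abbrev Xv : Fin 4 → MvPowerSeries (Fin 4) ℚ := MvPowerSeries.X

/-- `F(x,y,p,d) = Σ_{n,k≥0} Σ_{π ∈ C_{n,k}} x^n y^k p^{sv(π)} d^{dsv(π)}`, defined
coefficientwise. -/
noncomputable def Fdsv : MvPowerSeries (Fin 4) ℚ := fun m =>
  ((Finset.univ : Finset (Composition (m 0))).filter (fun c =>
    c.length = m 1 ∧ svL c.blocks = m 2 ∧ dsvL c.blocks = m 3)).card

/-- `B_a = 1 − y²·x^a·Σ_{j=1}^{a−1} x^j·(p·d^{a−j} − 1)` (so `B₁ = 1`); this is the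
power-series meaning of `1 − y²x^{a+1}((px^{a−1}−d^{a−1})/(x/d−1) − (x^{a−1}−1)/(x−1))`. -/
noncomputable def Bdsv (a : ℕ) : MvPowerSeries (Fin 4) ℚ :=
  1 - (Xv 1)^2 * (Xv 0)^a *
    ∑ j ∈ Finset.Icc 1 (a - 1), (Xv 0)^j * (Xv 2 * (Xv 3)^(a - j) - 1)

/-- `Σ_{a≥1} x^a·y·B_a⁻¹`, defined coefficientwise: since the `a`-th summand has `x`-adic
order at least `a`, only the terms with `1 ≤ a ≤ m 0` contribute to the coefficient of a
monomial `m`. -/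
noncomputable def Sdsv : MvPowerSeries (Fin 4) ℚ := fun m =>
  ∑ a ∈ Finset.Icc 1 (m 0), MvPowerSeries.coeff m ((Xv 0)^a * Xv 1 * (Bdsv a)⁻¹)

/-!
Split the compositions by their first part: `F = 1 + Σ_a F_a`, where `F_a` counts those beginning
with `a`. Prepending `a` to a composition `M` creates a new symmetric valley exactly when `M`
begins with `j, a` for some `j < a`, and its depth is then `a - j`; a composition beginning with
`j, a` (`j < a`) is in turn `j` prepended to one beginning with `a`, with no new valley. Hence
`F_a = x^a y (F - Σ_j x^j y F_a) + Σ_j x^a y p d^{a-j} x^j y F_a`, i.e. `F_a B_a = x^a y F`, and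
substituting `F_a = x^a y B_a⁻¹ F` into the first identity gives the theorem.
-/

open MvPowerSeries Finset

theorem coeff_mul_eq_sum_Icc {σ R : Type*} [CommSemiring R] (i : σ) {G S : MvPowerSeries σ R}
    {T : ℕ → MvPowerSeries σ R} (hT : ∀ a, X i ^ a ∣ T a)
    (hS : ∀ n, coeff n S = ∑ a ∈ Icc 1 (n i), coeff n (T a)) (m : σ →₀ ℕ) :
    coeff m (G * S) = ∑ a ∈ Icc 1 (m i), coeff m (G * T a) := by
  classical
  simp only [coeff_mul, hS, mul_sum]
  rw [sum_comm (s := Icc 1 (m i))]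
  refine sum_congr rfl fun p hp => ?_
  have hp2 : p.2 i ≤ m i := by
    rw [← mem_antidiagonal.1 hp, Finsupp.add_apply]
    exact Nat.le_add_left _ _
  exact sum_subset (Icc_subset_Icc_right hp2) fun a ha hna => by
    rw [X_pow_dvd_iff.1 (hT a) p.2 (by simp only [mem_Icc] at ha hna; omega), mul_zero]

/-- The depth of the symmetric valley that a part `a` placed in front of `M` creates
(`0` if it creates none). -/
def frontDepth (a : ℕ) : List ℕ → ℕ
  | j :: b :: _ => if j < a ∧ b = a then a - j else 0
  | _ => 0

theorem frontDepth_cons_of_le {a b : ℕ} (h : a ≤ b) (R : List ℕ) :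
    frontDepth a (b :: R) = 0 := by
  rcases R with _ | ⟨c, R⟩ <;> simp [frontDepth]; omega

theorem frontDepth_cons_cons_self {a j : ℕ} (h : j < a) (R : List ℕ) :
    frontDepth a (j :: a :: R) = a - j := by
  simp [frontDepth, h]

theorem symValleyIdx_cons (a : ℕ) (M : List ℕ) :
    symValleyIdx (a :: M) = (if 0 < frontDepth a M then {0} else ∅) ∪
      (symValleyIdx M).map (addRightEmbedding 1) := by
  ext (_ | i)
  · rcases M with _ | ⟨j, _ | ⟨b, R⟩⟩ <;> simp [symValleyIdx, frontDepth]
    by_cases hv : j < a ∧ b = a <;> simp [hv]; omega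
  · simp [symValleyIdx]
    split_ifs <;> simp <;> omega

theorem svL_cons (a : ℕ) (M : List ℕ) :
    svL (a :: M) = svL M + if 0 < frontDepth a M then 1 else 0 := by
  rw [svL, symValleyIdx_cons, card_union_of_disjoint, card_map, add_comm, svL]
  · split_ifs <;> rfl
  · split_ifs <;> simp

theorem dsvL_cons (a : ℕ) (M : List ℕ) : dsvL (a :: M) = dsvL M + frontDepth a M := by
  rw [dsvL, symValleyIdx_cons, sum_union, sum_map, add_comm, dsvL]
  · congr 1
    split_ifs with h
    · rcases M with _ | ⟨j, _ | ⟨b, R⟩⟩ <;> simp only [frontDepth, lt_self_iff_false] at h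
      by_cases hv : j < a ∧ b = a <;> simp_all [frontDepth]
    · simpa using (Nat.eq_zero_of_not_pos h).symm
  · split_ifs <;> simp

noncomputable def expo (r l s t : ℕ) : Fin 4 →₀ ℕ :=
  Finsupp.single 0 r + Finsupp.single 1 l + Finsupp.single 2 s + Finsupp.single 3 t

theorem expo_add (r l s t r' l' s' t' : ℕ) :
    expo r l s t + expo r' l' s' t' = expo (r + r') (l + l') (s + s') (t + t') := by
  simp only [expo, Finsupp.single_add]
  abel

theorem expo_eq_iff {r l s t : ℕ} {m : Fin 4 →₀ ℕ} :
    expo r l s t = m ↔ r = m 0 ∧ l = m 1 ∧ s = m 2 ∧ t = m 3 := by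
  constructor
  · rintro rfl
    simp [expo]
  · rintro ⟨rfl, rfl, rfl, rfl⟩
    ext i
    fin_cases i <;> simp [expo]

theorem monomial_expo {R : Type*} [CommSemiring R] (r l s t : ℕ) :
    monomial (expo r l s t) (1 : R) = X 0 ^ r * X 1 ^ l * X 2 ^ s * X 3 ^ t := by
  simp only [expo, X_pow_eq, monomial_mul_monomial, mul_one]

noncomputable def weight (L : List ℕ) : Fin 4 →₀ ℕ := expo L.sum L.length (svL L) (dsvL L)

theorem weight_cons (a : ℕ) (M : List ℕ) :
    weight (a :: M) =
      weight M + expo a 1 (if 0 < frontDepth a M then 1 else 0) (frontDepth a M) := by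
  rw [weight, weight, expo_add, svL_cons, dsvL_cons, List.sum_cons, List.length_cons, add_comm a]

def compsOfWeight (m : Fin 4 →₀ ℕ) : Set (List ℕ) := {L | (∀ x ∈ L, 0 < x) ∧ weight L = m}

theorem finite_compsOfWeight (m : Fin 4 →₀ ℕ) : (compsOfWeight m).Finite :=
  (Set.finite_range fun c : Composition (m 0) => c.blocks).subset fun L ⟨hpos, hw⟩ =>
    ⟨⟨L, hpos _, (expo_eq_iff.1 hw).1⟩, rfl⟩

noncomputable def gf (S : Set (List ℕ)) : MvPowerSeries (Fin 4) ℚ :=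
  fun m => ((S ∩ compsOfWeight m).ncard : ℚ)

theorem coeff_gf (S : Set (List ℕ)) (m : Fin 4 →₀ ℕ) :
    coeff m (gf S) = (S ∩ compsOfWeight m).ncard := rfl

theorem coeff_gf_congr {S T : Set (List ℕ)} {m : Fin 4 →₀ ℕ}
    (h : ∀ L ∈ compsOfWeight m, L ∈ S ↔ L ∈ T) : coeff m (gf S) = coeff m (gf T) := by
  rw [coeff_gf, coeff_gf, Set.inter_comm, Set.inter_comm T]
  congr 2
  ext L
  exact and_congr_right (h L)

theorem gf_congr {S T : Set (List ℕ)} (h : ∀ L, (∀ x ∈ L, 0 < x) → (L ∈ S ↔ L ∈ T)) :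
    gf S = gf T :=
  ext fun _ => coeff_gf_congr fun L hL => h L hL.1

theorem gf_union {S T : Set (List ℕ)} (h : Disjoint S T) : gf (S ∪ T) = gf S + gf T := by
  ext m
  rw [map_add, coeff_gf, coeff_gf, coeff_gf, Set.union_inter_distrib_right,
    Set.ncard_union_eq (h.mono Set.inter_subset_left Set.inter_subset_left)
      ((finite_compsOfWeight m).inter_of_right _) ((finite_compsOfWeight m).inter_of_right _)]
  push_cast
  rfl

theorem gf_biUnion {ι : Type*} (s : Finset ι) (U : ι → Set (List ℕ))
    (h : (s : Set ι).PairwiseDisjoint U) : gf (⋃ i ∈ s, U i) = ∑ i ∈ s, gf (U i) := by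
  classical
  induction s using Finset.induction_on with
  | empty => ext m; simp [coeff_gf]
  | insert i s hi ih =>
    rw [coe_insert, Set.pairwiseDisjoint_insert] at h
    rw [set_biUnion_insert, gf_union, ih h.1, sum_insert hi]
    exact Set.disjoint_iUnion₂_right.2 fun j hj => h.2 j hj (ne_of_mem_of_not_mem hj hi).symm

theorem gf_singleton_nil : gf {[]} = 1 := by
  ext m
  rw [coeff_gf, coeff_one]
  have hnil : weight [] = 0 := expo_eq_iff.2 (by simp [svL, dsvL, symValleyIdx])
  split_ifs with hm
  · simp [compsOfWeight, hm, hnil]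
  · simp [compsOfWeight, Ne.symm hm, hnil]

theorem gf_image_cons {r t : ℕ} (hr : 0 < r) {S : Set (List ℕ)}
    (hS : ∀ M ∈ S, frontDepth r M = t) :
    gf (List.cons r '' S) = monomial (expo r 1 (if 0 < t then 1 else 0) t) 1 * gf S := by
  ext m
  set δ := expo r 1 (if 0 < t then 1 else 0) t
  have hpos : ∀ M : List ℕ, (∀ x ∈ r :: M, 0 < x) ↔ ∀ x ∈ M, 0 < x := by
    simp [hr]
  have hw : ∀ M ∈ S, weight (r :: M) = weight M + δ := fun M hM => by rw [weight_cons, hS M hM]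
  rw [coeff_monomial_mul, coeff_gf, coeff_gf]
  split_ifs with hδ
  · rw [one_mul, ← Set.ncard_image_of_injective (S ∩ compsOfWeight (m - δ)) List.cons_injective]
    congr 2
    ext L
    simp only [Set.mem_inter_iff, Set.mem_image, compsOfWeight, Set.mem_ofPred_eq]
    constructor
    · rintro ⟨⟨M, hM, rfl⟩, hL, hwL⟩
      exact ⟨M, ⟨hM, (hpos M).1 hL, by rw [← hwL, hw M hM, add_tsub_cancel_right]⟩, rfl⟩
    · rintro ⟨M, ⟨hM, hMpos, hwM⟩, rfl⟩
      exact ⟨⟨M, hM, rfl⟩, (hpos M).2 hMpos, by rw [hw M hM, hwM, tsub_add_cancel_of_le hδ]⟩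
  · rw [Nat.cast_eq_zero, Set.ncard_eq_zero ((finite_compsOfWeight m).inter_of_right _)]
    refine Set.eq_empty_of_forall_notMem ?_
    rintro _ ⟨⟨M, hM, rfl⟩, -, hwL⟩
    exact hδ (hwL ▸ hw M hM ▸ le_add_self)

theorem gf_split_front (P : List ℕ) (a : ℕ) :
    gf (Set.range (P ++ ·)) = gf ((P ++ ·) '' {M | frontDepth a M = 0}) +
      ∑ j ∈ Icc 1 (a - 1), gf (Set.range fun R => P ++ j :: a :: R) := by
  rw [← gf_biUnion, ← gf_union]
  · refine gf_congr fun L hL => ?_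
    simp only [Set.mem_range, Set.mem_union, Set.mem_image, Set.mem_ofPred_eq, Set.mem_iUnion,
      mem_Icc, exists_prop]
    constructor
    · rintro ⟨M, rfl⟩
      by_cases hM : frontDepth a M = 0
      · exact Or.inl ⟨M, hM, rfl⟩
      · rcases M with _ | ⟨j, _ | ⟨b, R⟩⟩ <;> simp [frontDepth] at hM
        obtain ⟨hj, rfl, -⟩ := hM
        have : 0 < j := hL j (by simp)
        exact Or.inr ⟨j, ⟨this, by omega⟩, R, rfl⟩
    · rintro (⟨M, -, rfl⟩ | ⟨j, -, R, rfl⟩) <;> exact ⟨_, rfl⟩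
  · refine Set.disjoint_iUnion₂_right.2 fun j hj => Set.disjoint_left.2 ?_
    rintro _ ⟨M, hM, rfl⟩ ⟨R, hR⟩
    simp only [List.append_cancel_left_eq] at hR
    rw [mem_Icc] at hj
    rw [← hR, Set.mem_ofPred_eq, frontDepth_cons_cons_self (by omega)] at hM
    omega
  · intro j _ j' _ hjj'
    refine Set.disjoint_left.2 ?_
    rintro _ ⟨R, rfl⟩ ⟨R', hR'⟩
    simp only [List.append_cancel_left_eq, List.cons.injEq] at hR'
    exact hjj' hR'.1.symm

theorem gf_range_cons_cons_of_lt {a j : ℕ} (hj : 0 < j) (hja : j < a) :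
    gf (Set.range fun R => j :: a :: R) = X 0 ^ j * X 1 * gf (Set.range (List.cons a)) := by
  rw [Set.range_comp' (List.cons j), gf_image_cons (t := 0) hj, monomial_expo]
  · simp
  · rintro _ ⟨R, rfl⟩
    exact frontDepth_cons_of_le hja.le R

theorem gf_range_valley {a j : ℕ} (hja : j < a) :
    gf (Set.range fun R => a :: j :: a :: R) =
      X 0 ^ a * X 1 * X 2 * X 3 ^ (a - j) * gf (Set.range fun R => j :: a :: R) := by
  rw [Set.range_comp' (List.cons a) (fun R => j :: a :: R), gf_image_cons (t := a - j)
    (by omega), monomial_expo, if_pos (by omega)]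
  · simp
  · rintro _ ⟨R, rfl⟩
    exact frontDepth_cons_cons_self hja R

theorem gf_range_cons_mul_Bdsv {a : ℕ} (ha : 0 < a) :
    gf (Set.range (List.cons a)) * Bdsv a = X 0 ^ a * X 1 * gf Set.univ := by
  have hF : gf Set.univ = gf {M | frontDepth a M = 0} +
      ∑ j ∈ Icc 1 (a - 1), gf (Set.range fun R => j :: a :: R) := by
    simpa using gf_split_front [] a
  have hFa : gf (Set.range (List.cons a)) = gf (List.cons a '' {M | frontDepth a M = 0}) +
      ∑ j ∈ Icc 1 (a - 1), gf (Set.range fun R => a :: j :: a :: R) :=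
    gf_split_front [a] a
  have hJ : ∀ j ∈ Icc 1 (a - 1),
      gf (Set.range fun R => j :: a :: R) = X 0 ^ j * X 1 * gf (Set.range (List.cons a)) :=
    fun j hj => gf_range_cons_cons_of_lt (mem_Icc.1 hj).1 (by have := (mem_Icc.1 hj).2; omega)
  have hV : ∀ j ∈ Icc 1 (a - 1), gf (Set.range fun R => a :: j :: a :: R) =
      X 0 ^ a * X 1 * X 2 * X 3 ^ (a - j) * (X 0 ^ j * X 1 * gf (Set.range (List.cons a))) :=
    fun j hj => by rw [gf_range_valley (by have := (mem_Icc.1 hj).2; omega), hJ j hj]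
  have hN : gf (List.cons a '' {M | frontDepth a M = 0}) =
      X 0 ^ a * X 1 * gf {M | frontDepth a M = 0} := by
    rw [gf_image_cons (S := {M | frontDepth a M = 0}) ha fun _ hM => hM, monomial_expo]
    simp
  rw [sum_congr rfl hJ] at hF
  rw [sum_congr rfl hV, hN] at hFa
  have hsum : gf (Set.range (List.cons a)) *
      (X 1 ^ 2 * X 0 ^ a * ∑ j ∈ Icc 1 (a - 1), X 0 ^ j * (X 2 * X 3 ^ (a - j) - 1)) =
      ∑ j ∈ Icc 1 (a - 1),
          X 0 ^ a * X 1 * X 2 * X 3 ^ (a - j) * (X 0 ^ j * X 1 * gf (Set.range (List.cons a))) -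
        X 0 ^ a * X 1 * ∑ j ∈ Icc 1 (a - 1), X 0 ^ j * X 1 * gf (Set.range (List.cons a)) := by
    rw [mul_sum, mul_sum, mul_sum, ← sum_sub_distrib]
    exact sum_congr rfl fun j _ => by ring
  rw [hF, Bdsv]
  linear_combination hFa - hsum

theorem Fdsv_eq_gf_univ : Fdsv = gf Set.univ := by
  ext m
  have hcomps : compsOfWeight m = Composition.blocks ''
      ((univ.filter fun c : Composition (m 0) =>
        c.length = m 1 ∧ svL c.blocks = m 2 ∧ dsvL c.blocks = m 3 : Finset (Composition (m 0))) :
          Set (Composition (m 0))) := by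
    ext L
    simp only [compsOfWeight, weight, expo_eq_iff, Set.mem_ofPred_eq, Set.mem_image, coe_filter,
      mem_univ, true_and]
    constructor
    · rintro ⟨hpos, hsum, hlen, hsv, hdsv⟩
      exact ⟨⟨L, hpos _, hsum⟩, ⟨hlen, hsv, hdsv⟩, rfl⟩
    · rintro ⟨c, ⟨hlen, hsv, hdsv⟩, rfl⟩
      exact ⟨fun _ => c.blocks_pos, c.blocks_sum, hlen, hsv, hdsv⟩
  rw [coeff_gf, Set.univ_inter, hcomps,
    Set.ncard_image_of_injective _ fun _ _ h => Composition.ext h, Set.ncard_coe_finset]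
  rfl

theorem coeff_gf_univ (m : Fin 4 →₀ ℕ) :
    coeff m (gf Set.univ) =
      coeff m 1 + ∑ a ∈ Icc 1 (m 0), coeff m (gf (Set.range (List.cons a))) := by
  rw [← map_sum, ← gf_singleton_nil, ← map_add, ← gf_biUnion, ← gf_union]
  · refine coeff_gf_congr fun L ⟨hpos, hw⟩ => ?_
    have hsum : L.sum = m 0 := (expo_eq_iff.1 hw).1
    rcases L with _ | ⟨a, M⟩
    · simp
    · have ha : 0 < a := hpos a (by simp)
      have : a ≤ m 0 := by rw [← hsum, List.sum_cons]; omega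
      simp only [Set.mem_univ, Set.mem_union, Set.mem_singleton_iff, reduceCtorEq, false_or,
        Set.mem_iUnion, Set.mem_range, List.cons.injEq, exists_prop, mem_Icc, true_iff]
      exact ⟨a, ⟨ha, this⟩, M, rfl, rfl⟩
  · simp
  · intro a _ b _ hab
    refine Set.disjoint_left.2 ?_
    rintro _ ⟨M, rfl⟩ ⟨M', hM'⟩
    exact hab (List.cons.inj hM').1.symm

theorem constantCoeff_Bdsv (a : ℕ) : constantCoeff (Bdsv a) = 1 := by
  simp [Bdsv]

theorem Fdsv_mul_eq_gf_range_cons {a : ℕ} (ha : 0 < a) :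
    Fdsv * (X 0 ^ a * X 1 * (Bdsv a)⁻¹) = gf (Set.range (List.cons a)) := by
  rw [Fdsv_eq_gf_univ, eq_comm, ← mul_assoc, mul_comm (gf _), MvPowerSeries.eq_mul_inv_iff_mul_eq
    (by rw [constantCoeff_Bdsv]; exact one_ne_zero)]
  exact gf_range_cons_mul_Bdsv ha

/-- Theorem 3 of the paper: `F·(1 − Σ_{a≥1} x^a y B_a⁻¹) = 1`, i.e.
`F(x,y,p,d) = 1/(1 − Σ_{a≥1} x^a y/(1 − y²x^{a+1}((px^{a−1}−d^{a−1})/(x/d−1) − (x^{a−1}−1)/(x−1))))`. -/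
theorem dsv_generating_function : Fdsv * (1 - Sdsv) = 1 := by
  ext m
  rw [mul_sub, mul_one, map_sub,
    coeff_mul_eq_sum_Icc 0 (S := Sdsv) (fun _ => (dvd_mul_right _ _).mul_right _) fun _ => rfl,
    sum_congr rfl fun a ha => by rw [Fdsv_mul_eq_gf_range_cons (mem_Icc.1 ha).1],
    Fdsv_eq_gf_univ, coeff_gf_univ, add_sub_cancel_right]
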